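/- Assume λ + μ² ≠ 0 and let P, Q, R, S be a pqrs-quad. Then the two constraints μ·P(0) + Q(0) + R(0) = 0 and λ·P(0) − μ·Q(0) + S(0) = 0 hold if and only if the C-relations hold, i.e. for every w ∈ ℂ: P(−w) = −(λ+μ²)⁻¹·e^{2(1−ℓ)w}·(μ·e^{2w}·R(w) + S(w)); Q(−w) = −(λ+μ²)⁻¹·e^{−2ℓw}·(λ·e^{2w}·R(w) − μ·S(w)); R(−w) = −e^{2(1−ℓ)w}·(μ·e^{2w}·P(w) + Q(w)); S(−w) = −e^{−2ℓw}·(λ·e^{2w}·P(w) − μ·Q(w)). (The constraints are μp(1)+q(1)+r(1)=0 and λp(1)−μq(1)+s(1)=0 at z = 1, since e^0 = 1.) -/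

import Mathlib

/-!
Write `X = ![P, Q, R, S]`, so that the pqrs-system is the linear system `X' = A(w) X` with `A`
entire. The map `X ↦ (w ↦ C(X(-w), -w))`, where `C` is the right-hand side of the C-relations,
sends solutions to solutions when `λ + μ² ≠ 0`. The constraints say exactly that `X` and its
C-transform agree at `w = 0`, so by uniqueness for linear ODEs (Grönwall along the segment from
`0`) they agree everywhere, which is the C-relations.
-/

open Complex Matrix Set

theorem eq_zero_of_norm_deriv_le_mul_norm {E : Type*} [NormedAddCommGroup E] [NormedSpace ℂ E]
    {f f' : ℂ → E} {C : ℂ → ℝ} (hf : ∀ w, HasDerivAt f (f' w) w) (hC : Continuous C)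
    (hbound : ∀ w, ‖f' w‖ ≤ C w * ‖f w‖) (h0 : f 0 = 0) (w : ℂ) : f w = 0 := by
  set γ : ℝ → ℂ := fun t => t * w
  obtain ⟨K, hK⟩ := (isCompact_Icc (a := 0) (b := 1)).exists_bound_of_continuousOn
    (hC.comp (by fun_prop : Continuous γ)).continuousOn
  have hderiv (t : ℝ) : HasDerivAt (f ∘ γ) (w • f' (γ t)) t :=
    (hf (γ t)).scomp t (by simpa using (ofRealCLM.hasDerivAt (x := t)).mul_const w)
  have hbound' : ∀ t ∈ Ico (0 : ℝ) 1, ‖w • f' (γ t)‖ ≤ (‖w‖ * K) * ‖(f ∘ γ) t‖ := by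
    intro t ht
    rw [norm_smul, mul_assoc]
    gcongr
    calc ‖f' (γ t)‖ ≤ C (γ t) * ‖f (γ t)‖ := hbound _
      _ ≤ K * ‖f (γ t)‖ := by
        gcongr
        exact (le_abs_self _).trans (hK t (Ico_subset_Icc_self ht))
  simpa [γ] using eq_zero_of_abs_deriv_le_mul_abs_self_of_eq_zero_right
    (fun t _ => (hderiv t).continuousAt.continuousWithinAt) (fun t _ => (hderiv t).hasDerivWithinAt)
    (by simp [γ, h0]) hbound' 1 (by simp)

theorem Matrix.norm_mulVec_le_sum_norm {m n 𝕜 : Type*} [Fintype m] [Fintype n] [NormedRing 𝕜]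
    (A : Matrix m n 𝕜) (v : n → 𝕜) : ‖A *ᵥ v‖ ≤ (∑ i, ∑ j, ‖A i j‖) * ‖v‖ := by
  refine (pi_norm_le_iff_of_nonneg (by positivity)).2 fun i => ?_
  calc ‖(A *ᵥ v) i‖ ≤ ∑ j, ‖A i j‖ * ‖v‖ := by
        refine (norm_sum_le _ _).trans (Finset.sum_le_sum fun j _ => ?_)
        exact (norm_mul_le _ _).trans (by gcongr; exact norm_le_pi_norm v j)
    _ = (∑ j, ‖A i j‖) * ‖v‖ := by rw [Finset.sum_mul]
    _ ≤ (∑ i, ∑ j, ‖A i j‖) * ‖v‖ := by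
        gcongr
        exact Finset.single_le_sum (f := fun i => ∑ j, ‖A i j‖) (fun i _ => by positivity)
          (Finset.mem_univ i)

theorem Matrix.eq_of_hasDerivAt_mulVec {ι : Type*} [Fintype ι] {M : ℂ → Matrix ι ι ℂ}
    (hM : Continuous M) {X Y : ℂ → ι → ℂ} (hX : ∀ w, HasDerivAt X (M w *ᵥ X w) w)
    (hY : ∀ w, HasDerivAt Y (M w *ᵥ Y w) w) (h0 : X 0 = Y 0) : X = Y := by
  funext w
  rw [← sub_eq_zero]
  refine eq_zero_of_norm_deriv_le_mul_norm (f := X - Y) (fun w => (hX w).sub (hY w))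
    (C := fun w => ∑ i, ∑ j, ‖M w i j‖) (by fun_prop) (fun w => ?_) (by simp [h0]) w
  rw [← mulVec_sub]
  exact norm_mulVec_le_sum_norm _ _

namespace Pqrs

variable (ell lam mu : ℂ)

noncomputable def coeffMatrix (w : ℂ) : Matrix (Fin 4) (Fin 4) ℂ :=
  !![mu * exp (-w) + (ell - 1), -exp (-w), exp w, 0;
    exp w * (lam - (ell + 1) * mu * exp w), mu * exp w, 0, exp w;
    -(lam + mu ^ 2) * exp (-w), 0, 2 * (ell - 1) - mu * exp w, -exp (-w);
    0, -(lam + mu ^ 2) * exp (-w), exp w * (lam - (ell + 1) * mu * exp w),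
      (ell - 1) - mu * exp (-w)]

theorem continuous_coeffMatrix : Continuous (coeffMatrix ell lam mu) :=
  continuous_pi fun i => continuous_pi fun j => by
    fin_cases i <;> fin_cases j <;> simp [coeffMatrix] <;> fun_prop

/-- The C-relations read `X (-w) = cTransform (X w) w`. -/
noncomputable def cTransform (v : Fin 4 → ℂ) (w : ℂ) : Fin 4 → ℂ :=
  ![-(lam + mu ^ 2)⁻¹ * exp (2 * (1 - ell) * w) * (mu * exp (2 * w) * v 2 + v 3),
    -(lam + mu ^ 2)⁻¹ * exp (-(2 * ell) * w) * (lam * exp (2 * w) * v 2 - mu * v 3),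
    -exp (2 * (1 - ell) * w) * (mu * exp (2 * w) * v 0 + v 1),
    -exp (-(2 * ell) * w) * (lam * exp (2 * w) * v 0 - mu * v 1)]

theorem coeffMatrix_mulVec (w : ℂ) (v : Fin 4 → ℂ) :
    coeffMatrix ell lam mu w *ᵥ v =
      ![(mu * exp (-w) + (ell - 1)) * v 0 - exp (-w) * v 1 + exp w * v 2,
        exp w * (lam - (ell + 1) * mu * exp w) * v 0 + mu * exp w * v 1 + exp w * v 3,
        -(lam + mu ^ 2) * exp (-w) * v 0 + (2 * (ell - 1) - mu * exp w) * v 2 - exp (-w) * v 3,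
        -(lam + mu ^ 2) * exp (-w) * v 1 + exp w * (lam - (ell + 1) * mu * exp w) * v 2
          + ((ell - 1) - mu * exp (-w)) * v 3] := by
  ext i
  fin_cases i <;> simp [coeffMatrix, mulVec, dotProduct, Fin.sum_univ_four] <;> ring

variable {ell lam mu}

theorem hasDerivAt_of_pqrs_system {P Q R S : ℂ → ℂ}
    (hP : Differentiable ℂ P) (hQ : Differentiable ℂ Q)
    (hR : Differentiable ℂ R) (hS : Differentiable ℂ S)
    (hsys1 : ∀ w : ℂ, exp w * deriv P w =
      (mu + (ell - 1) * exp w) * P w - Q w + exp (2 * w) * R w)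
    (hsys2 : ∀ w : ℂ, deriv Q w =
      exp w * ((lam - (ell + 1) * mu * exp w) * P w + mu * Q w + S w))
    (hsys3 : ∀ w : ℂ, exp w * deriv R w =
      -(lam + mu ^ 2) * P w + exp w * (2 * (ell - 1) - mu * exp w) * R w - S w)
    (hsys4 : ∀ w : ℂ, exp w * deriv S w =
      -(lam + mu ^ 2) * Q w + exp (2 * w) * (lam - (ell + 1) * mu * exp w) * R w
        + ((ell - 1) * exp w - mu) * S w) (w : ℂ) :
    HasDerivAt (fun w => ![P w, Q w, R w, S w])
      (coeffMatrix ell lam mu w *ᵥ ![P w, Q w, R w, S w]) w := by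
  have hexp2 : exp (2 * w) = exp w * exp w := by rw [← exp_add, two_mul]
  have hw := exp_ne_zero w
  rw [hasDerivAt_pi]
  intro i
  fin_cases i <;>
    simp only [coeffMatrix_mulVec, Fin.zero_eta, Fin.mk_one, Fin.reduceFinMk, Fin.isValue, cons_val,
      cons_val_zero, cons_val_one, exp_neg]
  · refine (hP w).hasDerivAt.congr_deriv ?_
    field_simp
    linear_combination hsys1 w + R w * hexp2
  · refine (hQ w).hasDerivAt.congr_deriv ?_
    linear_combination hsys2 w
  · refine (hR w).hasDerivAt.congr_deriv ?_
    field_simp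
    linear_combination hsys3 w
  · refine (hS w).hasDerivAt.congr_deriv ?_
    field_simp
    linear_combination hsys4 w + (lam - (ell + 1) * mu * exp w) * R w * hexp2

theorem hasDerivAt_cTransform_neg (hne : lam + mu ^ 2 ≠ 0) {X : ℂ → Fin 4 → ℂ}
    (hX : ∀ w, HasDerivAt X (coeffMatrix ell lam mu w *ᵥ X w) w) (w : ℂ) :
    HasDerivAt (fun w => cTransform ell lam mu (X (-w)) (-w))
      (coeffMatrix ell lam mu w *ᵥ cTransform ell lam mu (X (-w)) (-w)) w := by
  have hXneg (i : Fin 4) : HasDerivAt (fun w => X (-w) i)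
      (-(coeffMatrix ell lam mu (-w) *ᵥ X (-w)) i) w := by
    simpa using hasDerivAt_pi.1 ((hX (-w)).scomp w (hasDerivAt_neg' w)) i
  have hexp (k : ℂ) : HasDerivAt (fun w => exp (k * -w)) (-k * exp (k * -w)) w := by
    simpa [mul_comm] using ((hasDerivAt_neg' w).const_mul k).cexp
  have exp_two_one_sub : exp (2 * (1 - ell) * -w) = exp (2 * ell * w) * (exp w)⁻¹ ^ 2 := by
    rw [← exp_neg, ← exp_nat_mul, ← exp_add]; ring_nf
  have exp_two_ell : exp (-(2 * ell) * -w) = exp (2 * ell * w) := by ring_nf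
  have exp_two_neg : exp (2 * -w) = (exp w)⁻¹ ^ 2 := by rw [← exp_neg, ← exp_nat_mul]; ring_nf
  have hw := exp_ne_zero w
  rw [hasDerivAt_pi]
  intro i
  fin_cases i <;> [
    refine (((hexp _).const_mul _).mul
      (((hexp 2).const_mul mu).mul (hXneg 2) |>.add (hXneg 3))).congr_deriv ?_;
    refine (((hexp _).const_mul _).mul
      (((hexp 2).const_mul lam).mul (hXneg 2) |>.sub ((hXneg 3).const_mul mu))).congr_deriv ?_;
    refine (((hexp _).neg).mul
      (((hexp 2).const_mul mu).mul (hXneg 0) |>.add (hXneg 1))).congr_deriv ?_;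
    refine (((hexp _).neg).mul
      (((hexp 2).const_mul lam).mul (hXneg 0) |>.sub ((hXneg 1).const_mul mu))).congr_deriv ?_]
  all_goals
    simp only [cTransform, coeffMatrix_mulVec, Fin.zero_eta, Fin.mk_one, Fin.reduceFinMk,
      Fin.isValue, cons_val, cons_val_zero, cons_val_one, Pi.neg_apply, Pi.add_apply, Pi.sub_apply,
      Pi.mul_apply, exp_two_one_sub, exp_two_ell, exp_two_neg, neg_neg, exp_neg]
    field_simp
    ring

theorem eq_cTransform_zero_iff (hne : lam + mu ^ 2 ≠ 0) (v : Fin 4 → ℂ) :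
    v = cTransform ell lam mu v 0 ↔ mu * v 0 + v 1 + v 2 = 0 ∧ lam * v 0 - mu * v 1 + v 3 = 0 := by
  constructor
  · intro h
    have h2 := congrFun h 2
    have h3 := congrFun h 3
    simp only [cTransform, Fin.isValue, cons_val, mul_zero, exp_zero, mul_one] at h2 h3
    constructor
    · linear_combination h2
    · linear_combination h3
  · rintro ⟨h1, h2⟩
    ext i
    fin_cases i <;>
      simp only [cTransform, Fin.zero_eta, Fin.mk_one, Fin.reduceFinMk, Fin.isValue, cons_val,
        cons_val_zero, cons_val_one, mul_zero, exp_zero, mul_one] <;>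
      field_simp
    · linear_combination mu * h1 + h2
    · linear_combination lam * h1 - mu * h2
    · linear_combination h1
    · linear_combination h2

theorem forall_neg_eq_cTransform_iff (hne : lam + mu ^ 2 ≠ 0) {X : ℂ → Fin 4 → ℂ}
    (hX : ∀ w, HasDerivAt X (coeffMatrix ell lam mu w *ᵥ X w) w) :
    (∀ w, X (-w) = cTransform ell lam mu (X w) w) ↔ X 0 = cTransform ell lam mu (X 0) 0 := by
  refine ⟨fun h => by simpa using h 0, fun h0 w => ?_⟩
  have := eq_of_hasDerivAt_mulVec (continuous_coeffMatrix ell lam mu) hX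
    (hasDerivAt_cTransform_neg hne hX) (by simpa using h0)
  simpa using congrFun this (-w)

end Pqrs

theorem statement_1 (ell lam mu : ℂ) (hne : lam + mu ^ 2 ≠ 0) (P Q R S : ℂ → ℂ)
    (hP : Differentiable ℂ P) (hQ : Differentiable ℂ Q)
    (hR : Differentiable ℂ R) (hS : Differentiable ℂ S)
    (hsys1 : ∀ w : ℂ, Complex.exp w * deriv P w =
      (mu + (ell - 1) * Complex.exp w) * P w - Q w + Complex.exp (2 * w) * R w)
    (hsys2 : ∀ w : ℂ, deriv Q w =
      Complex.exp w * ((lam - (ell + 1) * mu * Complex.exp w) * P w + mu * Q w + S w))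
    (hsys3 : ∀ w : ℂ, Complex.exp w * deriv R w =
      -(lam + mu ^ 2) * P w + Complex.exp w * (2 * (ell - 1) - mu * Complex.exp w) * R w - S w)
    (hsys4 : ∀ w : ℂ, Complex.exp w * deriv S w =
      -(lam + mu ^ 2) * Q w + Complex.exp (2 * w) * (lam - (ell + 1) * mu * Complex.exp w) * R w
        + ((ell - 1) * Complex.exp w - mu) * S w) :
    (mu * P 0 + Q 0 + R 0 = 0 ∧ lam * P 0 - mu * Q 0 + S 0 = 0) ↔
    (∀ w : ℂ,
      P (-w) = -(lam + mu ^ 2)⁻¹ * Complex.exp (2 * (1 - ell) * w) *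
        (mu * Complex.exp (2 * w) * R w + S w) ∧
      Q (-w) = -(lam + mu ^ 2)⁻¹ * Complex.exp (-(2 * ell) * w) *
        (lam * Complex.exp (2 * w) * R w - mu * S w) ∧
      R (-w) = -Complex.exp (2 * (1 - ell) * w) * (mu * Complex.exp (2 * w) * P w + Q w) ∧
      S (-w) = -Complex.exp (-(2 * ell) * w) * (lam * Complex.exp (2 * w) * P w - mu * Q w)) := by
  have hX := Pqrs.hasDerivAt_of_pqrs_system hP hQ hR hS hsys1 hsys2 hsys3 hsys4
  have key := Pqrs.forall_neg_eq_cTransform_iff hne hX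
  rw [Pqrs.eq_cTransform_zero_iff hne] at key
  simp only [Pqrs.cTransform, vecCons_inj] at key
  simpa using key.symm
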